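/- arXiv:2509.23439 — 2 statements merged into one kernel-verified Lean document; each statement's English description precedes it below -/
import Mathlib

section
/- Let A be symmetric positive definite with diagonal blocks A₁, …, A_k of sizes n₁, …, n_k (∑nᵢ = n). Then the block diagonal matrix B̄ = blkdiag(A₁^{-1/2}, …, A_k^{-1/2}) minimizes ω(BᵀAB) over all block diagonal matrices B with blocks of the given sizes. -/
/-!
Write `C̄ = B̄ D̄` with `D̄ = blkdiag (Bᵢ⁻¹ Cᵢ)`, so that `C̄ᵀ A C̄ = D̄ᵀ M D̄` for
`M = B̄ᵀ A B̄`, whose diagonal blocks are identities. The trace of a block diagonal congruence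
only sees the diagonal blocks, hence `tr (D̄ᵀ M D̄) = tr (D̄ᵀ D̄)` and `tr M = n`, while
`det (D̄ᵀ M D̄) = det (D̄ᵀ D̄) · det M`. Thus `ω (D̄ᵀ M D̄) = ω (D̄ᵀ D̄) · ω M`, and
`ω (D̄ᵀ D̄) ≥ 1` is AM-GM for the eigenvalues of `D̄ᵀ D̄`.
-/

open Matrix

namespace Matrix

section Blocks

variable {ι α : Type*} {l m n : ι → Type*}

theorem trace_eq_sum_trace_blockDiag' [Fintype ι] [∀ i, Fintype (m i)] [AddCommMonoid α]
    (M : Matrix (Σ i, m i) (Σ i, m i) α) :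
    M.trace = ∑ k, (M.blockDiag' k).trace := by
  simp only [trace, ← Finset.univ_sigma_univ, Finset.sum_sigma, diag_apply, blockDiag'_apply]

theorem blockDiag'_blockDiagonal'_mul [Fintype ι] [DecidableEq ι] [∀ i, Fintype (m i)]
    [NonUnitalNonAssocSemiring α] (X : ∀ i, Matrix (l i) (m i) α)
    (M : Matrix (Σ i, m i) (Σ i, n i) α) (k : ι) :
    (blockDiagonal' X * M).blockDiag' k = X k * M.blockDiag' k := by
  ext a b
  simp only [blockDiag'_apply, mul_apply, ← Finset.univ_sigma_univ, Finset.sum_sigma]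
  rw [Finset.sum_eq_single k (fun j _ hj => Finset.sum_eq_zero fun c _ => by
    rw [blockDiagonal'_apply_ne _ _ _ hj.symm, zero_mul]) (by simp)]
  simp [blockDiagonal'_apply_eq]

theorem blockDiag'_mul_blockDiagonal' [Fintype ι] [DecidableEq ι] [∀ i, Fintype (m i)]
    [NonUnitalNonAssocSemiring α] (M : Matrix (Σ i, l i) (Σ i, m i) α)
    (Y : ∀ i, Matrix (m i) (n i) α) (k : ι) :
    (M * blockDiagonal' Y).blockDiag' k = M.blockDiag' k * Y k := by
  ext a b
  simp only [blockDiag'_apply, mul_apply, ← Finset.univ_sigma_univ, Finset.sum_sigma]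
  rw [Finset.sum_eq_single k (fun j _ hj => Finset.sum_eq_zero fun c _ => by
    rw [blockDiagonal'_apply_ne _ _ _ hj, mul_zero]) (by simp)]
  simp [blockDiagonal'_apply_eq]

theorem trace_blockDiagonal'_mul_mul_blockDiagonal' [Fintype ι] [DecidableEq ι]
    [∀ i, Fintype (l i)] [∀ i, Fintype (m i)] [∀ i, Fintype (n i)] [NonUnitalNonAssocSemiring α]
    (X : ∀ i, Matrix (l i) (m i) α) (M : Matrix (Σ i, m i) (Σ i, n i) α)
    (Y : ∀ i, Matrix (n i) (l i) α) :
    (blockDiagonal' X * M * blockDiagonal' Y).trace = ∑ k, (X k * M.blockDiag' k * Y k).trace := by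
  rw [trace_eq_sum_trace_blockDiag']
  simp only [blockDiag'_mul_blockDiagonal', blockDiag'_blockDiagonal'_mul]

theorem trace_eq_card_of_blockDiag'_eq_one [Fintype ι] [∀ i, Fintype (m i)]
    [∀ i, DecidableEq (m i)] [AddCommMonoidWithOne α] {M : Matrix (Σ i, m i) (Σ i, m i) α} (hM : M.blockDiag' = 1) :
    M.trace = Fintype.card (Σ i, m i) := by
  simp [trace_eq_sum_trace_blockDiag', hM, Fintype.card_sigma]

theorem isUnit_blockDiagonal' [Fintype ι] [DecidableEq ι] [∀ i, Fintype (m i)]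
    [∀ i, DecidableEq (m i)] [Semiring α] {D : ∀ i, Matrix (m i) (m i) α}
    (hD : ∀ i, IsUnit (D i)) : IsUnit (blockDiagonal' D) :=
  (Pi.isUnit_iff.mpr hD).map (blockDiagonal'RingHom m α)

end Blocks

section Omega

variable {n : Type*} [Fintype n] [DecidableEq n]

-- For a positive definite `S`, the arithmetic over the geometric mean of its eigenvalues.
noncomputable def omegaCond (S : Matrix n n ℝ) : ℝ :=
  (S.trace / Fintype.card n) / S.det ^ ((1 : ℝ) / Fintype.card n)

theorem PosSemidef.det_rpow_le_trace_div_card [Nonempty n] {M : Matrix n n ℝ}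
    (hM : M.PosSemidef) :
    M.det ^ ((1 : ℝ) / Fintype.card n) ≤ M.trace / Fintype.card n := by
  have hev := hM.eigenvalues_nonneg
  have hdet : M.det = ∏ i, hM.1.eigenvalues i := by
    simpa using hM.1.det_eq_prod_eigenvalues
  have htr : M.trace = ∑ i, hM.1.eigenvalues i := by
    simpa using hM.1.trace_eq_sum_eigenvalues
  have hweights : ∑ _i : n, (1 : ℝ) / Fintype.card n = 1 := by simp
  calc M.det ^ ((1 : ℝ) / Fintype.card n)
      = ∏ i, hM.1.eigenvalues i ^ ((1 : ℝ) / Fintype.card n) := by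
        rw [hdet, Real.finsetProd_rpow _ _ fun i _ => hev i]
    _ ≤ ∑ i, (1 : ℝ) / Fintype.card n * hM.1.eigenvalues i :=
        Real.geom_mean_le_arith_mean_weighted _ _ _ (fun _ _ => by positivity) hweights
          fun i _ => hev i
    _ = M.trace / Fintype.card n := by
        rw [htr, Finset.sum_div]
        exact Finset.sum_congr rfl fun i _ => by ring

theorem PosSemidef.omegaCond_nonneg {M : Matrix n n ℝ} (hM : M.PosSemidef) : 0 ≤ M.omegaCond :=
  div_nonneg (div_nonneg hM.trace_nonneg (Nat.cast_nonneg _))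
    (Real.rpow_nonneg hM.det_nonneg _)

theorem PosDef.one_le_omegaCond [Nonempty n] {M : Matrix n n ℝ} (hM : M.PosDef) :
    1 ≤ M.omegaCond :=
  (one_le_div (Real.rpow_pos_of_pos hM.det_pos _)).mpr hM.posSemidef.det_rpow_le_trace_div_card

end Omega

section BlockOmega

variable {ι : Type*} [Fintype ι] [DecidableEq ι] {m : ι → Type*} [∀ i, Fintype (m i)]
  [∀ i, DecidableEq (m i)]

theorem trace_transpose_mul_mul_blockDiagonal'_of_blockDiag'_eq_one {α : Type*} [Semiring α]
    {M : Matrix (Σ i, m i) (Σ i, m i) α} (hM : M.blockDiag' = 1)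
    (D : ∀ i, Matrix (m i) (m i) α) :
    ((blockDiagonal' D)ᵀ * M * blockDiagonal' D).trace =
      ((blockDiagonal' D)ᵀ * blockDiagonal' D).trace := by
  rw [blockDiagonal'_transpose, trace_blockDiagonal'_mul_mul_blockDiagonal',
    ← Matrix.mul_one (blockDiagonal' fun i => (D i)ᵀ), trace_blockDiagonal'_mul_mul_blockDiagonal',
    hM, blockDiag'_one]

theorem omegaCond_transpose_mul_mul_blockDiagonal' [Nonempty (Σ i, m i)]
    {M : Matrix (Σ i, m i) (Σ i, m i) ℝ} (hdet : 0 ≤ M.det) (hM : M.blockDiag' = 1)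
    (D : ∀ i, Matrix (m i) (m i) ℝ) :
    ((blockDiagonal' D)ᵀ * M * blockDiagonal' D).omegaCond =
      ((blockDiagonal' D)ᵀ * blockDiagonal' D).omegaCond * M.omegaCond := by
  have hcard : (Fintype.card (Σ i, m i) : ℝ) ≠ 0 := Nat.cast_ne_zero.mpr Fintype.card_ne_zero
  have hdet' : ((blockDiagonal' D)ᵀ * M * blockDiagonal' D).det =
      ((blockDiagonal' D)ᵀ * blockDiagonal' D).det * M.det := by
    simp only [det_mul]; ring
  have hsq : 0 ≤ ((blockDiagonal' D)ᵀ * blockDiagonal' D).det := by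
    rw [det_mul, det_transpose]; exact mul_self_nonneg _
  simp only [omegaCond, trace_transpose_mul_mul_blockDiagonal'_of_blockDiag'_eq_one hM, hdet',
    trace_eq_card_of_blockDiag'_eq_one hM, Real.mul_rpow hsq hdet]
  rw [div_self hcard, div_mul_div_comm, mul_one]

theorem omegaCond_le_omegaCond_transpose_mul_mul_blockDiagonal'
    {M : Matrix (Σ i, m i) (Σ i, m i) ℝ} (hM : M.PosSemidef) (hblk : M.blockDiag' = 1)
    {D : ∀ i, Matrix (m i) (m i) ℝ} (hD : IsUnit (blockDiagonal' D)) :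
    M.omegaCond ≤ ((blockDiagonal' D)ᵀ * M * blockDiagonal' D).omegaCond := by
  cases isEmpty_or_nonempty (Σ i, m i)
  · simp [omegaCond]
  have hDD : ((blockDiagonal' D)ᵀ * blockDiagonal' D).PosDef := by
    simpa using PosDef.conjTranspose_mul_self _ (mulVec_injective_iff_isUnit.mpr hD)
  rw [omegaCond_transpose_mul_mul_blockDiagonal' hM.det_nonneg hblk]
  exact le_mul_of_one_le_left hM.omegaCond_nonneg hDD.one_le_omegaCond

end BlockOmega

end Matrix

/-- `ω`-optimal block diagonal preconditioner.  Let `A ≻ 0` with principal diagonal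
blocks `Aᵢ` of sizes `nᵢ` (`∑ nᵢ = n`).  If each `Bᵢ` is `Aᵢ^{-1/2}` (characterized as
the positive definite matrix with `Bᵢ Aᵢ Bᵢ = I`), then `B̄ = blkdiag(B₁,…,B_k)`
minimizes `ω(CᵀAC)` over all block diagonal matrices `C` (with invertible blocks
of the given sizes). -/
theorem omega_optimal_block_diagonal_preconditioner (k : ℕ) (sz : Fin k → ℕ)
    (A : Matrix ((i : Fin k) × Fin (sz i)) ((i : Fin k) × Fin (sz i)) ℝ)
    (hA : A.PosDef)
    (B : ∀ i : Fin k, Matrix (Fin (sz i)) (Fin (sz i)) ℝ)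
    (hB : ∀ i, (B i).PosDef ∧
      B i * (Matrix.of fun a b => A ⟨i, a⟩ ⟨i, b⟩) * B i = 1) :
    let N : ℕ := Fintype.card ((i : Fin k) × Fin (sz i))
    let omega : Matrix ((i : Fin k) × Fin (sz i)) ((i : Fin k) × Fin (sz i)) ℝ → ℝ :=
      fun S => (S.trace / N) / S.det ^ ((1 : ℝ) / N)
    ∀ C : ∀ i : Fin k, Matrix (Fin (sz i)) (Fin (sz i)) ℝ,
      (∀ i, IsUnit (C i).det) →
      omega ((Matrix.blockDiagonal' B)ᵀ * A * Matrix.blockDiagonal' B) ≤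
        omega ((Matrix.blockDiagonal' C)ᵀ * A * Matrix.blockDiagonal' C) := by
  intro N omega C hC
  set D : ∀ i, Matrix (Fin (sz i)) (Fin (sz i)) ℝ := fun i => (B i)⁻¹ * C i
  have hBunit (i : Fin k) : IsUnit (B i) := (hB i).1.isUnit
  have hfactor : blockDiagonal' C = blockDiagonal' B * blockDiagonal' D := by
    rw [← blockDiagonal'_mul]
    congr with i : 1
    rw [mul_nonsing_inv_cancel_left _ _ ((isUnit_iff_isUnit_det _).mp (hBunit i))]
  have hblocks : ((blockDiagonal' B)ᵀ * A * blockDiagonal' B).blockDiag' = 1 := by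
    funext i
    rw [blockDiagonal'_transpose, blockDiag'_mul_blockDiagonal', blockDiag'_blockDiagonal'_mul,
      ← conjTranspose_eq_transpose_of_trivial, (hB i).1.isHermitian.eq]
    exact (hB i).2
  have hconj : ((blockDiagonal' B)ᵀ * A * blockDiagonal' B).PosSemidef := by
    simpa using hA.posSemidef.conjTranspose_mul_mul_same (blockDiagonal' B)
  have hunit : IsUnit (blockDiagonal' D) := isUnit_blockDiagonal' fun i =>
    (isUnit_nonsing_inv_iff.mpr (hBunit i)).mul ((isUnit_iff_isUnit_det _).mpr (hC i))
  have hcongr : (blockDiagonal' C)ᵀ * A * blockDiagonal' C =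
      (blockDiagonal' D)ᵀ * ((blockDiagonal' B)ᵀ * A * blockDiagonal' B) * blockDiagonal' D := by
    simp only [hfactor, transpose_mul, Matrix.mul_assoc]
  rw [hcongr]
  exact omegaCond_le_omegaCond_transpose_mul_mul_blockDiagonal' hconj hblocks hunit
end

section
/- Let x be a unit right eigenvector of A·Diag(d) for eigenvalue λ₁ = λ_max(A Diag(d)), where A ∈ S^n_{++} and d > 0. Then the vector g = (λ₁/(xᵀ(d∘x)))·(x∘x) is a Fenchel subgradient of the convex function y ↦ λ_max(A Diag(y)) at d: for all y ∈ ℝ^n, ⟨g, y − d⟩ ≤ λ_max(A Diag(y)) − λ_max(A Diag(d)). -/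
/-!
With `S = √A`, the matrix `A Diag(y)` is similar to the symmetric matrix `S Diag(y) S`, and the
substitution `v = S⁻¹x` turns the Rayleigh bound `vᵀ(S Diag(y) S)v ≤ λ_max · vᵀv` into
`xᵀDiag(y)x ≤ λ_max(A Diag(y)) · xᵀA⁻¹x`. At `y = d` this is an equality, since `Diag(d)x = λ₁A⁻¹x`.
Dividing by `xᵀA⁻¹x = xᵀ(d ∘ x)/λ₁` and subtracting the two cases gives the subgradient inequality.
-/

open Matrix

theorem spectrum_units_mul_comm {R A : Type*} [CommSemiring R] [Ring A] [Algebra R A]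
    (u : Aˣ) (a : A) : spectrum R (u * a) = spectrum R (a * u) := by
  rw [← spectrum.units_conjugate' (u := u) (a := u * a)]
  simp

namespace Matrix

variable {n : Type*} [Fintype n] [DecidableEq n]

theorem dotProduct_mulVec_eq_mul_of_mul_mulVec_eq_smul {R : Type*} [CommRing R]
    {A B : Matrix n n R} (hA : IsUnit A.det) {x : n → R} {μ : R} (h : (A * B) *ᵥ x = μ • x) :
    x ⬝ᵥ B *ᵥ x = μ * (x ⬝ᵥ A⁻¹ *ᵥ x) := by
  have hBx : B *ᵥ x = μ • A⁻¹ *ᵥ x := by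
    rw [← mulVec_smul, ← h, mulVec_mulVec, nonsing_inv_mul_cancel_left _ _ hA]
  rw [hBx, dotProduct_smul, smul_eq_mul]

open scoped MatrixOrder in
theorem IsHermitian.dotProduct_mulVec_le_sSup_spectrum {M : Matrix n n ℝ}
    (hM : M.IsHermitian) (v : n → ℝ) : v ⬝ᵥ M *ᵥ v ≤ sSup (spectrum ℝ M) * (v ⬝ᵥ v) := by
  -- `M ≤ λ_max • 1` in the Loewner order, by the continuous functional calculus
  have hle : M ≤ algebraMap ℝ _ (sSup (spectrum ℝ M)) :=
    le_algebraMap_of_spectrum_le fun _ h => le_csSup finite_real_spectrum.bddAbove h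
  simpa only [star_trivial, Algebra.algebraMap_eq_smul_one, sub_mulVec, smul_mulVec, one_mulVec,
    dotProduct_sub, dotProduct_smul, smul_eq_mul, sub_nonneg]
    using (le_iff.mp hle).dotProduct_mulVec_nonneg v

open scoped MatrixOrder in
theorem PosDef.dotProduct_mulVec_le_sSup_spectrum_mul {A M : Matrix n n ℝ} (hA : A.PosDef)
    (hM : M.IsHermitian) (x : n → ℝ) :
    x ⬝ᵥ M *ᵥ x ≤ sSup (spectrum ℝ (A * M)) * (x ⬝ᵥ A⁻¹ *ᵥ x) := by
  set S := CFC.sqrt A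
  have hSS : S * S = A := CFC.sqrt_mul_sqrt_self A hA.posSemidef.nonneg
  have hS : S.IsHermitian := (CFC.sqrt_nonneg A).posSemidef.isHermitian
  have hSt : Sᵀ = S := by simpa using hS.eq
  have hSunit : IsUnit S := (CFC.isUnit_sqrt_iff A hA.posSemidef.nonneg).mpr hA.isUnit
  have hspec : spectrum ℝ (A * M) = spectrum ℝ (S * M * S) := by
    rw [← hSS, mul_assoc, ← hSunit.unit_spec, spectrum_units_mul_comm]
  have hSMS : (S * M * S).IsHermitian := by
    simpa only [hS.eq] using isHermitian_conjTranspose_mul_mul S hM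
  set v := S⁻¹ *ᵥ x
  have hSv : S *ᵥ v = x := by
    rw [mulVec_mulVec, mul_nonsing_inv _ ((isUnit_iff_isUnit_det S).mp hSunit), one_mulVec]
  have hquad : v ⬝ᵥ (S * M * S) *ᵥ v = x ⬝ᵥ M *ᵥ x := by
    rw [← mulVec_mulVec, ← mulVec_mulVec, dotProduct_mulVec, ← mulVec_transpose, hSt, hSv]
  have hnorm : v ⬝ᵥ v = x ⬝ᵥ A⁻¹ *ᵥ x := by
    rw [dotProduct_mulVec, ← mulVec_transpose, transpose_nonsing_inv, hSt, mulVec_mulVec,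
      ← mul_inv_rev, hSS, dotProduct_comm]
  rw [hspec, ← hquad, ← hnorm]
  exact hSMS.dotProduct_mulVec_le_sSup_spectrum v

end Matrix

/-- Fenchel subgradient of `λ_max(A Diag(·))`.  Let `A ≻ 0`, `d > 0`, and let `x` be a
unit right eigenvector of `A Diag(d)` for `λ₁ = λ_max(A Diag d)`.  Then
`g = (λ₁/(xᵀ(d ∘ x))) · (x ∘ x)` satisfies
`⟨g, y − d⟩ ≤ λ_max(A Diag y) − λ_max(A Diag d)` for all `y ∈ ℝ^n`. -/
theorem subgradient_lamMax (n : ℕ)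
    (A : Matrix (Fin n) (Fin n) ℝ) (hA : A.PosDef)
    (d : Fin n → ℝ) (hd : ∀ i, 0 < d i)
    (lam1 : ℝ) (hlam1 : lam1 = sSup (spectrum ℝ (A * Matrix.diagonal d)))
    (x : Fin n → ℝ) (hxunit : ∑ i, x i * x i = 1)
    (heig : (A * Matrix.diagonal d).mulVec x = lam1 • x) :
    ∀ y : Fin n → ℝ,
      ∑ i, (lam1 / (∑ j, x j * (d j * x j)) * (x i * x i)) * (y i - d i) ≤
        sSup (spectrum ℝ (A * Matrix.diagonal y)) -
          sSup (spectrum ℝ (A * Matrix.diagonal d)) := by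
  intro y
  have hx : x ≠ 0 := by rintro rfl; simp at hxunit
  have quadratic_form (z : Fin n → ℝ) : ∑ j, x j * (z j * x j) = x ⬝ᵥ diagonal z *ᵥ x := by
    simp [dotProduct, mulVec_diagonal]
  set c := x ⬝ᵥ A⁻¹ *ᵥ x
  have hc : 0 < c := by simpa using hA.inv.dotProduct_mulVec_pos hx
  have hp : x ⬝ᵥ diagonal d *ᵥ x = lam1 * c :=
    dotProduct_mulVec_eq_mul_of_mul_mulVec_eq_smul hA.det_pos.ne'.isUnit heig
  have hp_pos : 0 < x ⬝ᵥ diagonal d *ᵥ x := by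
    simpa using (posDef_diagonal_iff.mpr hd).dotProduct_mulVec_pos hx
  have hlam1_ne : lam1 ≠ 0 := left_ne_zero_of_mul (hp ▸ hp_pos.ne')
  have hray : x ⬝ᵥ diagonal y *ᵥ x ≤ sSup (spectrum ℝ (A * diagonal y)) * c :=
    hA.dotProduct_mulVec_le_sSup_spectrum_mul (isHermitian_diagonal y) x
  have hlhs : ∑ i, lam1 / (∑ j, x j * (d j * x j)) * (x i * x i) * (y i - d i)
      = (x ⬝ᵥ diagonal y *ᵥ x - x ⬝ᵥ diagonal d *ᵥ x) / c := by
    rw [← quadratic_form, ← quadratic_form, ← Finset.sum_sub_distrib, Finset.sum_div,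
      quadratic_form, hp]
    refine Finset.sum_congr rfl fun i _ => ?_
    field_simp
  rw [hlhs, ← hlam1, div_le_iff₀ hc, hp]
  linarith
end
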